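/- arXiv:2109.09383 — 7 statements merged into one kernel-verified Lean document; each statement's English description precedes it below -/
import Mathlib

section
/- Let n ≥ 2 and m ≥ 1 be integers. Let λ₁ ≥ λ₂ ≥ ⋯ ≥ λₙ ≥ 0 be real numbers with λᵢ = 0 whenever i > m, and suppose λ₁²λᵢ² ≤ 2 + λᵢ² for every i ≥ 2. Let h_{α,ij} (1 ≤ α ≤ m, 1 ≤ i,j ≤ n) be real numbers symmetric in the last two indices (h_{α,ij} = h_{α,ji}), and write h_{i,jk} for h_{α,jk} with α = i, interpreted as 0 when i > m (such terms are always multiplied by λᵢ = 0). Then Σ_{α=1}^m Σ_{i,j=1}^n h²_{α,ij} + Σ_{i,j=1}^n λᵢ² h²_{i,ij} + Σ_{k=1}^n Σ_{i≠j} λᵢλⱼ h_{i,jk} h_{j,ik} ≥ Σ_{α=n+1}^m Σ_{i,j=1}^n h²_{α,ij} + Σ_{i=1}^n (1 + λᵢ²) h²_{i,ii}. (This is the algebraic inequality underlying the estimate Δ_M log v ≥ Σ_{α>n,i,j} h²_{α,ij} + Σᵢ (1+λᵢ²)h²_{i,ii} for minimal graphs, via the identity Δ_M log v = Σ_{α,i,j}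 h²_{α,ij} + Σ_{i,j} λᵢ² h²_{i,ij} + Σ_{k,i≠j} λᵢλⱼ h_{i,jk}h_{j,ik}.) -/
open Finset

private lemma pair_aux' (A B u v : ℝ) (h : A^2*B^2 ≤ 2 + A^2) :
    0 ≤ (2+A^2)*u^2 + v^2 + 2*(A*B*(u*v)) := by
  nlinarith [sq_nonneg ((2+A^2)*u + A*B*v),
    mul_nonneg (by linarith : (0:ℝ) ≤ 2+A^2-A^2*B^2) (sq_nonneg v), sq_nonneg A]

private lemma psd3 (A B C a b c : ℝ) (hC0 : 0 ≤ C) (hCB : C ≤ B) (hBA : B ≤ A)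
    (hB2 : B^2 ≤ 2) (hAB : A^2*B^2 ≤ 2+B^2) (hAC : A^2*C^2 ≤ 2+C^2) :
    0 ≤ a^2+b^2+c^2 + A*B*(a*b) + A*C*(a*c) + B*C*(b*c) := by
  have hB0 : 0 ≤ B := hC0.trans hCB
  have hA0 : 0 ≤ A := hB0.trans hBA
  have hC2 : C^2 ≤ 2 := by nlinarith
  have hD : 0 ≤ 4 - A^2*B^2 - A^2*C^2 - B^2*C^2 + A^2*B^2*C^2 := by
    have h1 : 0 ≤ (2 + B^2 - A^2*B^2)*(2 - C^2) := by
      apply mul_nonneg <;> linarith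
    have h2 : 0 ≤ (2 + C^2 - A^2*C^2)*(2 - B^2) := by
      apply mul_nonneg <;> linarith
    nlinarith [h1, h2]
  rcases lt_or_ge (A^2*B^2) 4 with h4 | h4
  · have key : (4 - A^2*B^2) * (4*(a^2+b^2+c^2 + A*B*(a*b) + A*C*(a*c) + B*C*(b*c)))
        = (4 - A^2*B^2)*(2*a + A*B*b + A*C*c)^2
          + ((4 - A^2*B^2)*b + (2*(B*C) - (A*B)*(A*C))*c)^2
          + 4*(4 - A^2*B^2 - A^2*C^2 - B^2*C^2 + A^2*B^2*C^2)*c^2 := by ring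
    have h5 : 0 ≤ (4 - A^2*B^2) * (4*(a^2+b^2+c^2 + A*B*(a*b) + A*C*(a*c) + B*C*(b*c))) := by
      rw [key]
      have := mul_nonneg (by linarith : (0:ℝ) ≤ 4 - A^2*B^2)
        (sq_nonneg (2*a + A*B*b + A*C*c))
      have := sq_nonneg ((4 - A^2*B^2)*b + (2*(B*C) - (A*B)*(A*C))*c)
      have := mul_nonneg hD (sq_nonneg c)
      linarith
    nlinarith [h5, h4]
  · have hEq : A^2*B^2 = 4 := le_antisymm (by linarith) h4
    have hB : B^2 = 2 := by nlinarith
    have hA : A^2 = 2 := by nlinarith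
    have hAB2 : A*B = 2 := by
      nlinarith [mul_nonneg hA0 hB0, sq_nonneg (A*B - 2), sq_nonneg (A*B + 2)]
    have hABeq : A = B := by nlinarith
    subst hABeq
    have hq : (A*C)^2 ≤ 4 := by nlinarith
    rw [hAB2]
    nlinarith [sq_nonneg (2*a + 2*b + A*C*c), hq, sq_nonneg c]

private lemma triple_pt {n : ℕ} (lam : Fin n → ℝ) (hnonneg : ∀ i, 0 ≤ lam i)
    (hmono : ∀ i j : Fin n, i ≤ j → lam j ≤ lam i)
    (hsq2 : ∀ i : Fin n, (i:ℕ) ≠ 0 → lam i^2 ≤ 2)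
    (hprod : ∀ i j : Fin n, (j:ℕ) ≠ 0 → lam i^2*lam j^2 ≤ 2 + lam j^2)
    (a b c : ℝ) (i j k : Fin n) (hij : i ≠ j) (hik : i ≠ k) (hjk : j ≠ k) :
    0 ≤ (a^2 + lam i * lam j * (a*b)) + (b^2 + lam j * lam k * (b*c))
      + (c^2 + lam k * lam i * (c*a)) := by
  have main : ∀ s t u : Fin n, s < t → t < u → ∀ x y z : ℝ,
      0 ≤ x^2+y^2+z^2 + lam s*lam t*(x*y) + lam s*lam u*(x*z) + lam t*lam u*(y*z) := by
    intro s t u hst htu x y z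
    have ht0 : (t:ℕ) ≠ 0 := by rw [Fin.lt_def] at hst; omega
    have hu0 : (u:ℕ) ≠ 0 := by rw [Fin.lt_def] at htu; omega
    exact psd3 (lam s) (lam t) (lam u) x y z (hnonneg u) (hmono t u htu.le)
      (hmono s t hst.le) (hsq2 t ht0) (hprod s t ht0) (hprod s u hu0)
  rcases lt_trichotomy i j with h1 | h1 | h1
  · rcases lt_trichotomy j k with h2 | h2 | h2
    · nlinarith [main i j k h1 h2 a b c]
    · exact absurd h2 hjk
    · rcases lt_trichotomy i k with h3 | h3 | h3
      · nlinarith [main i k j h3 h2 a c b]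
      · exact absurd h3 hik
      · nlinarith [main k i j h3 h1 c a b]
  · exact absurd h1 hij
  · rcases lt_trichotomy i k with h2 | h2 | h2
    · nlinarith [main j i k h1 h2 b a c]
    · exact absurd h2 hik
    · rcases lt_trichotomy j k with h3 | h3 | h3
      · nlinarith [main j k i h3 h2 b c a]
      · exact absurd h3 hjk
      · nlinarith [main k j i h3 h1 c b a]

section SumLemmas
variable {ι : Type*} [Fintype ι] [DecidableEq ι]

private lemma pair_split (G : ι → ι → ℝ) :
    ∑ i, ∑ j, G i j = (∑ i, G i i) + ∑ i, ∑ j ∈ univ.erase i, G i j := by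
  rw [← Finset.sum_add_distrib]
  exact Finset.sum_congr rfl fun i _ => (Finset.add_sum_erase univ (G i) (mem_univ i)).symm

private lemma inner_split (F : ι → ℝ) (i j : ι) (hij : j ≠ i) :
    ∑ k, F k = (F i + F j) + ∑ k ∈ (univ.erase i).erase j, F k := by
  rw [← Finset.add_sum_erase univ F (mem_univ i), add_assoc,
    ← Finset.add_sum_erase (univ.erase i) F (mem_erase.mpr ⟨hij, mem_univ j⟩)]

private lemma sum_swap_erase (φ : ι → ι → ℝ) :
    ∑ i, ∑ j ∈ univ.erase i, φ i j = ∑ i, ∑ j ∈ univ.erase i, φ j i := by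
  rw [Finset.sum_comm' (s := univ) (t := fun i => univ.erase i) (t' := univ)
    (s' := fun j => univ.erase j)]
  intro x y
  simp [Finset.mem_erase, ne_comm]

private lemma triple_split (F : ι → ι → ι → ℝ) :
    ∑ i, ∑ j, ∑ k, F i j k
      = (∑ i, F i i i) + ((∑ i, ∑ j ∈ univ.erase i, F i i j)
        + ((∑ i, ∑ j ∈ univ.erase i, (F i j i + F i j j))
        + ∑ i, ∑ j ∈ univ.erase i, ∑ k ∈ (univ.erase i).erase j, F i j k)) := by
  have hper : ∀ i, ∑ j, ∑ k, F i j k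
      = F i i i + ((∑ j ∈ univ.erase i, F i i j)
        + ((∑ j ∈ univ.erase i, (F i j i + F i j j))
        + ∑ j ∈ univ.erase i, ∑ k ∈ (univ.erase i).erase j, F i j k)) := by
    intro i
    have h1 : ∑ j, ∑ k, F i j k
        = (∑ k, F i i k) + ∑ j ∈ univ.erase i, ∑ k, F i j k :=
      (Finset.add_sum_erase univ (fun j => ∑ k, F i j k) (mem_univ i)).symm
    have h2 : ∑ k, F i i k = F i i i + ∑ k ∈ univ.erase i, F i i k :=
      (Finset.add_sum_erase univ (F i i) (mem_univ i)).symm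
    have h3 : ∀ j ∈ univ.erase i, ∑ k, F i j k
        = (F i j i + F i j j) + ∑ k ∈ (univ.erase i).erase j, F i j k := fun j hj =>
      inner_split (F i j) i j (mem_erase.mp hj).1
    rw [h1, h2, Finset.sum_congr rfl h3, Finset.sum_add_distrib]
    ring
  rw [Finset.sum_congr rfl fun i _ => hper i, Finset.sum_add_distrib,
    Finset.sum_add_distrib, Finset.sum_add_distrib]

private lemma nested_to_prod (f : ι → ι → ι → ℝ) :
    ∑ i, ∑ j ∈ univ.erase i, ∑ k ∈ (univ.erase i).erase j, f i j k
      = ∑ t ∈ univ.filter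
          (fun t : ι × ι × ι => t.1 ≠ t.2.1 ∧ t.1 ≠ t.2.2 ∧ t.2.1 ≠ t.2.2),
          f t.1 t.2.1 t.2.2 := by
  rw [Finset.sum_filter, Fintype.sum_prod_type]
  refine Finset.sum_congr rfl fun i _ => ?_
  rw [Fintype.sum_prod_type]
  rw [← Finset.sum_subset (Finset.subset_univ (univ.erase i))
    (f := fun j => ∑ k, if i ≠ j ∧ i ≠ k ∧ j ≠ k then f i j k else 0)
    (by intro j _ hj
        have : j = i := by simpa using hj
        subst this
        simp)]
  refine Finset.sum_congr rfl fun j hj => ?_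
  have hij : i ≠ j := fun hh => (mem_erase.mp hj).1 hh.symm
  rw [← Finset.sum_subset (Finset.subset_univ ((univ.erase i).erase j))
    (f := fun k => if i ≠ j ∧ i ≠ k ∧ j ≠ k then f i j k else 0)
    (by intro k _ hk
        simp only [mem_erase, mem_univ, and_true, not_and, not_not] at hk
        by_cases h1 : k = j
        · subst h1; simp [hij]
        · have : k = i := by tauto
          subst this; simp [hij])]
  refine Finset.sum_congr rfl fun k hk => ?_
  simp only [mem_erase, mem_univ, and_true] at hk
  rw [if_pos ⟨hij, fun hh => hk.2 hh.symm, fun hh => hk.1 hh.symm⟩]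

private lemma prod_cyc (f : ι → ι → ι → ℝ) :
    ∑ t ∈ univ.filter
        (fun t : ι × ι × ι => t.1 ≠ t.2.1 ∧ t.1 ≠ t.2.2 ∧ t.2.1 ≠ t.2.2),
        f t.1 t.2.1 t.2.2
      = ∑ t ∈ univ.filter
        (fun t : ι × ι × ι => t.1 ≠ t.2.1 ∧ t.1 ≠ t.2.2 ∧ t.2.1 ≠ t.2.2),
        f t.2.1 t.2.2 t.1 := by
  refine Finset.sum_nbij' (i := fun t : ι × ι × ι => (t.2.2, t.1, t.2.1))
    (j := fun t : ι × ι × ι => (t.2.1, t.2.2, t.1)) ?_ ?_ ?_ ?_ ?_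
  · intro a ha; simp only [mem_filter, mem_univ, true_and] at ha ⊢; tauto
  · intro a ha; simp only [mem_filter, mem_univ, true_and] at ha ⊢; tauto
  · intro a _; rfl
  · intro a _; rfl
  · intro a _; rfl

end SumLemmas

/-- **The algebraic inequality behind `Δ_M log v ≥ Σ_{α>n,i,j} h²_{α,ij} + Σᵢ (1+λᵢ²)h²_{i,ii}`**
(Lemma 6.1). Indices are 0-based: `lam ⟨0,_⟩` is `λ₁`, `(i : ℕ) ≥ m` means `i > m` in the
1-based notation, and `H i j k` is `h_{i,jk}` (interpreted as `0` when `i > m`). -/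
theorem log_slope_laplacian_inequality
    (n m : ℕ) (hn : 2 ≤ n) (hm : 1 ≤ m)
    (lam : Fin n → ℝ)
    (hnonneg : ∀ i, 0 ≤ lam i)
    (hmono : ∀ i j : Fin n, i ≤ j → lam j ≤ lam i)
    (hzero : ∀ i : Fin n, m ≤ (i : ℕ) → lam i = 0)
    (hcond : ∀ i : Fin n, (i : ℕ) ≠ 0 →
      (lam ⟨0, by omega⟩) ^ 2 * (lam i) ^ 2 ≤ 2 + (lam i) ^ 2)
    (h : Fin m → Fin n → Fin n → ℝ)
    (hsymm : ∀ α i j, h α i j = h α j i)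
    (H : Fin n → Fin n → Fin n → ℝ)
    (hH : ∀ i j k, H i j k = if hi : (i : ℕ) < m then h ⟨(i : ℕ), hi⟩ j k else 0) :
    (∑ α : Fin m, ∑ i : Fin n, ∑ j : Fin n, (h α i j) ^ 2)
      + (∑ i : Fin n, ∑ j : Fin n, (lam i) ^ 2 * (H i i j) ^ 2)
      + (∑ k : Fin n, ∑ i : Fin n, ∑ j ∈ univ.erase i,
          lam i * lam j * H i j k * H j i k)
    ≥ (∑ α ∈ univ.filter (fun α : Fin m => n ≤ (α : ℕ)),
        ∑ i : Fin n, ∑ j : Fin n, (h α i j) ^ 2)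
      + ∑ i : Fin n, (1 + (lam i) ^ 2) * (H i i i) ^ 2 := by
  classical
  -- basic facts about `lam`
  have hmax : ∀ i, lam i ≤ lam ⟨0, by omega⟩ :=
    fun i => hmono ⟨0, by omega⟩ i (by simp [Fin.le_def])
  have hsqle : ∀ i j : Fin n, lam i ≤ lam j → lam i^2 ≤ lam j^2 :=
    fun i j hij => pow_le_pow_left₀ (hnonneg i) hij 2
  have hprod : ∀ i j : Fin n, (j:ℕ) ≠ 0 → lam i^2 * lam j^2 ≤ 2 + lam j^2 := by
    intro i j hj
    have h1 := hsqle i ⟨0, by omega⟩ (hmax i)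
    have h2 := hcond j hj
    nlinarith [sq_nonneg (lam j)]
  have hsq2 : ∀ i : Fin n, (i:ℕ) ≠ 0 → lam i^2 ≤ 2 := by
    intro i hi
    have := hprod i i hi
    nlinarith [sq_nonneg (lam i)]
  have hkey : ∀ i j : Fin n, i ≠ j → lam i^2 * lam j^2 ≤ 2 + lam i^2 := by
    intro i j hij
    by_cases hi : (i:ℕ) = 0
    · have hj : (j:ℕ) ≠ 0 := fun hj0 => hij (Fin.ext (by omega))
      have h1 := hprod i j hj
      have hle : lam j ≤ lam i := hmono i j (by rw [Fin.le_def]; omega)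
      have := hsqle j i hle
      linarith
    · rw [mul_comm]; exact hprod j i hi
  have hsymmH : ∀ i j k, H i j k = H i k j := by
    intro i j k
    rw [hH i j k, hH i k j]
    split_ifs with h1
    · exact hsymm _ j k
    · rfl
  -- Step A : split the α-sum
  have e0 : ∀ i : Fin n, ¬ (i:ℕ) < m → (∑ j : Fin n, ∑ k : Fin n, (H i j k)^2) = 0 := by
    intro i hi
    apply Finset.sum_eq_zero; intro j _
    apply Finset.sum_eq_zero; intro k _
    rw [hH, dif_neg hi]
    norm_num
  have hsplitα : (∑ α : Fin m, ∑ i : Fin n, ∑ j : Fin n, (h α i j)^2)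
      = (∑ α ∈ univ.filter (fun α : Fin m => n ≤ (α:ℕ)),
          ∑ i : Fin n, ∑ j : Fin n, (h α i j)^2)
        + ∑ i : Fin n, ∑ j : Fin n, ∑ k : Fin n, (H i j k)^2 := by
    have h1 := Finset.sum_filter_add_sum_filter_not (univ : Finset (Fin m))
      (fun α => n ≤ (α:ℕ)) (fun α => ∑ i : Fin n, ∑ j : Fin n, (h α i j)^2)
    have h2 : (∑ α ∈ univ.filter (fun α : Fin m => ¬ n ≤ (α:ℕ)),
          ∑ i : Fin n, ∑ j : Fin n, (h α i j)^2)
        = ∑ i : Fin n, ∑ j : Fin n, ∑ k : Fin n, (H i j k)^2 := by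
      rw [← Finset.sum_subset (Finset.filter_subset (fun i : Fin n => (i:ℕ) < m) univ)
        (fun i _ hi => e0 i (by simpa using hi))]
      refine Finset.sum_bij'
        (fun (α : Fin m) (hα : α ∈ univ.filter (fun α : Fin m => ¬ n ≤ (α:ℕ))) =>
          (⟨(α:ℕ), by simp only [mem_filter, mem_univ, true_and, not_le] at hα; exact hα⟩ : Fin n))
        (fun (i : Fin n) (hi : i ∈ univ.filter (fun i : Fin n => (i:ℕ) < m)) =>
          (⟨(i:ℕ), by simp only [mem_filter, mem_univ, true_and] at hi; exact hi⟩ : Fin m))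
        ?_ ?_ ?_ ?_ ?_
      · intro α hα
        simp only [mem_filter, mem_univ, true_and]
        exact α.isLt
      · intro i hi
        simp only [mem_filter, mem_univ, true_and, not_le]
        exact i.isLt
      · intro α _; rfl
      · intro i _; rfl
      · intro α hα
        refine Finset.sum_congr rfl fun j _ => Finset.sum_congr rfl fun k _ => ?_
        rw [hH]
        rw [dif_pos (show (((⟨(α:ℕ), _⟩ : Fin n)) : ℕ) < m from α.isLt)]
    linarith [h1, h2]
  rw [hsplitα]
  -- decompositions
  have hT1 : (∑ i : Fin n, ∑ j : Fin n, ∑ k : Fin n, (H i j k)^2)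
      = (∑ i : Fin n, (H i i i)^2)
        + ((∑ i : Fin n, ∑ j ∈ univ.erase i, (H i i j)^2)
        + ((∑ i : Fin n, ∑ j ∈ univ.erase i, ((H i j i)^2 + (H i j j)^2))
        + ∑ i : Fin n, ∑ j ∈ univ.erase i, ∑ k ∈ (univ.erase i).erase j, (H i j k)^2)) :=
    triple_split (fun i j k => (H i j k)^2)
  have hT2 : (∑ i : Fin n, ∑ j : Fin n, (lam i)^2 * (H i i j)^2)
      = (∑ i : Fin n, (lam i)^2 * (H i i i)^2)
        + ∑ i : Fin n, ∑ j ∈ univ.erase i, (lam i)^2 * (H i i j)^2 :=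
    pair_split (fun i j => (lam i)^2 * (H i i j)^2)
  have hC : (∑ k : Fin n, ∑ i : Fin n, ∑ j ∈ univ.erase i,
        lam i * lam j * H i j k * H j i k)
      = (∑ i : Fin n, ∑ j ∈ univ.erase i,
          (lam i * lam j * H i j i * H j i i + lam i * lam j * H i j j * H j i j))
        + ∑ i : Fin n, ∑ j ∈ univ.erase i, ∑ k ∈ (univ.erase i).erase j,
            lam i * lam j * H i j k * H j i k := by
    rw [Finset.sum_comm]
    rw [Finset.sum_congr rfl fun i (_ : i ∈ univ) => Finset.sum_comm]
    rw [Finset.sum_congr rfl fun i (_ : i ∈ univ) =>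
      Finset.sum_congr rfl fun j hj =>
        inner_split (fun k => lam i * lam j * H i j k * H j i k) i j (mem_erase.mp hj).1]
    rw [Finset.sum_congr rfl fun i (_ : i ∈ univ) => Finset.sum_add_distrib,
      Finset.sum_add_distrib]
  have hR : (∑ i : Fin n, (1 + (lam i)^2) * (H i i i)^2)
      = (∑ i : Fin n, (H i i i)^2) + ∑ i : Fin n, (lam i)^2 * (H i i i)^2 := by
    rw [← Finset.sum_add_distrib]
    exact Finset.sum_congr rfl fun i _ => by ring
  -- the "pair" part is nonnegative
  have hSA : 0 ≤ (∑ i : Fin n, ∑ j ∈ univ.erase i, (H i i j)^2)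
      + (∑ i : Fin n, ∑ j ∈ univ.erase i, ((H i j i)^2 + (H i j j)^2))
      + (∑ i : Fin n, ∑ j ∈ univ.erase i, (lam i)^2 * (H i i j)^2)
      + (∑ i : Fin n, ∑ j ∈ univ.erase i,
          (lam i * lam j * H i j i * H j i i + lam i * lam j * H i j j * H j i j)) := by
    have hmerge : (∑ i : Fin n, ∑ j ∈ univ.erase i, (H i i j)^2)
        + (∑ i : Fin n, ∑ j ∈ univ.erase i, ((H i j i)^2 + (H i j j)^2))
        + (∑ i : Fin n, ∑ j ∈ univ.erase i, (lam i)^2 * (H i i j)^2)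
        + (∑ i : Fin n, ∑ j ∈ univ.erase i,
            (lam i * lam j * H i j i * H j i i + lam i * lam j * H i j j * H j i j))
        = ∑ i : Fin n, ∑ j ∈ univ.erase i,
            ((H i i j)^2 + ((H i j i)^2 + (H i j j)^2) + (lam i)^2 * (H i i j)^2
              + (lam i * lam j * H i j i * H j i i + lam i * lam j * H i j j * H j i j)) := by
      rw [← Finset.sum_add_distrib, ← Finset.sum_add_distrib, ← Finset.sum_add_distrib]
      refine Finset.sum_congr rfl fun i _ => ?_
      rw [← Finset.sum_add_distrib, ← Finset.sum_add_distrib, ← Finset.sum_add_distrib]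
    rw [hmerge]
    have hswap : (∑ i : Fin n, ∑ j ∈ univ.erase i,
          ((H i i j)^2 + ((H i j i)^2 + (H i j j)^2) + (lam i)^2 * (H i i j)^2
            + (lam i * lam j * H i j i * H j i i + lam i * lam j * H i j j * H j i j)))
        = ∑ i : Fin n, ∑ j ∈ univ.erase i,
            ((H j j i)^2 + ((H j i j)^2 + (H j i i)^2) + (lam j)^2 * (H j j i)^2
              + (lam j * lam i * H j i j * H i j j + lam j * lam i * H j i i * H i j i)) :=
      sum_swap_erase (fun i j =>
        (H i i j)^2 + ((H i j i)^2 + (H i j j)^2) + (lam i)^2 * (H i i j)^2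
          + (lam i * lam j * H i j i * H j i i + lam i * lam j * H i j j * H j i j))
    have h2S : 0 ≤ (∑ i : Fin n, ∑ j ∈ univ.erase i,
          ((H i i j)^2 + ((H i j i)^2 + (H i j j)^2) + (lam i)^2 * (H i i j)^2
            + (lam i * lam j * H i j i * H j i i + lam i * lam j * H i j j * H j i j)))
        + ∑ i : Fin n, ∑ j ∈ univ.erase i,
            ((H j j i)^2 + ((H j i j)^2 + (H j i i)^2) + (lam j)^2 * (H j j i)^2
              + (lam j * lam i * H j i j * H i j j + lam j * lam i * H j i i * H i j i)) := by
      rw [← Finset.sum_add_distrib]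
      refine Finset.sum_nonneg fun i _ => ?_
      rw [← Finset.sum_add_distrib]
      refine Finset.sum_nonneg fun j hj => ?_
      have hij : i ≠ j := fun hh => (mem_erase.mp hj).1 hh.symm
      have e1 : H i j i = H i i j := hsymmH i j i
      have e2 : H j i j = H j j i := hsymmH j i j
      rw [e1, e2]
      nlinarith [pair_aux' (lam i) (lam j) (H i i j) (H j i i) (hkey i j hij),
        pair_aux' (lam j) (lam i) (H j j i) (H i j j) (hkey j i (Ne.symm hij))]
    linarith [hswap, h2S]
  -- the "distinct triple" part is nonnegative
  have hSB : 0 ≤ (∑ i : Fin n, ∑ j ∈ univ.erase i, ∑ k ∈ (univ.erase i).erase j, (H i j k)^2)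
      + ∑ i : Fin n, ∑ j ∈ univ.erase i, ∑ k ∈ (univ.erase i).erase j,
          lam i * lam j * H i j k * H j i k := by
    have hmerge : (∑ i : Fin n, ∑ j ∈ univ.erase i, ∑ k ∈ (univ.erase i).erase j, (H i j k)^2)
        + (∑ i : Fin n, ∑ j ∈ univ.erase i, ∑ k ∈ (univ.erase i).erase j,
            lam i * lam j * H i j k * H j i k)
        = ∑ i : Fin n, ∑ j ∈ univ.erase i, ∑ k ∈ (univ.erase i).erase j,
            ((H i j k)^2 + lam i * lam j * H i j k * H j i k) := by
      rw [← Finset.sum_add_distrib]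
      refine Finset.sum_congr rfl fun i _ => ?_
      rw [← Finset.sum_add_distrib]
      refine Finset.sum_congr rfl fun j _ => ?_
      rw [← Finset.sum_add_distrib]
    rw [hmerge, nested_to_prod (fun i j k => (H i j k)^2 + lam i * lam j * H i j k * H j i k)]
    have hc1 := prod_cyc (fun i j k => (H i j k)^2 + lam i * lam j * H i j k * H j i k)
    have hc2 := prod_cyc (fun i j k => (H j k i)^2 + lam j * lam k * H j k i * H k j i)
    have h3 : 0 ≤ ∑ t ∈ univ.filter
        (fun t : Fin n × Fin n × Fin n => t.1 ≠ t.2.1 ∧ t.1 ≠ t.2.2 ∧ t.2.1 ≠ t.2.2),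
        (((H t.1 t.2.1 t.2.2)^2 + lam t.1 * lam t.2.1 * H t.1 t.2.1 t.2.2 * H t.2.1 t.1 t.2.2)
          + ((H t.2.1 t.2.2 t.1)^2 + lam t.2.1 * lam t.2.2 * H t.2.1 t.2.2 t.1 * H t.2.2 t.2.1 t.1)
          + ((H t.2.2 t.1 t.2.1)^2 + lam t.2.2 * lam t.1 * H t.2.2 t.1 t.2.1 * H t.1 t.2.2 t.2.1)) := by
      refine Finset.sum_nonneg fun t ht => ?_
      simp only [mem_filter, mem_univ, true_and] at ht
      obtain ⟨hij, hik, hjk⟩ := ht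
      obtain ⟨i, j, k⟩ := t
      simp only at hij hik hjk ⊢
      have e1 : H j k i = H j i k := hsymmH j k i
      have e2 : H i k j = H i j k := hsymmH i k j
      have e3 : H k j i = H k i j := hsymmH k j i
      rw [e1, e2, e3]
      nlinarith [triple_pt lam hnonneg hmono hsq2 hprod
        (H i j k) (H j i k) (H k i j) i j k hij hik hjk]
    have hsum3 : (∑ t ∈ univ.filter
          (fun t : Fin n × Fin n × Fin n => t.1 ≠ t.2.1 ∧ t.1 ≠ t.2.2 ∧ t.2.1 ≠ t.2.2),
          ((H t.1 t.2.1 t.2.2)^2 + lam t.1 * lam t.2.1 * H t.1 t.2.1 t.2.2 * H t.2.1 t.1 t.2.2))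
        + (∑ t ∈ univ.filter
          (fun t : Fin n × Fin n × Fin n => t.1 ≠ t.2.1 ∧ t.1 ≠ t.2.2 ∧ t.2.1 ≠ t.2.2),
          ((H t.2.1 t.2.2 t.1)^2 + lam t.2.1 * lam t.2.2 * H t.2.1 t.2.2 t.1 * H t.2.2 t.2.1 t.1))
        + (∑ t ∈ univ.filter
          (fun t : Fin n × Fin n × Fin n => t.1 ≠ t.2.1 ∧ t.1 ≠ t.2.2 ∧ t.2.1 ≠ t.2.2),
          ((H t.2.2 t.1 t.2.1)^2 + lam t.2.2 * lam t.1 * H t.2.2 t.1 t.2.1 * H t.1 t.2.2 t.2.1))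
        = ∑ t ∈ univ.filter
          (fun t : Fin n × Fin n × Fin n => t.1 ≠ t.2.1 ∧ t.1 ≠ t.2.2 ∧ t.2.1 ≠ t.2.2),
          (((H t.1 t.2.1 t.2.2)^2 + lam t.1 * lam t.2.1 * H t.1 t.2.1 t.2.2 * H t.2.1 t.1 t.2.2)
            + ((H t.2.1 t.2.2 t.1)^2 + lam t.2.1 * lam t.2.2 * H t.2.1 t.2.2 t.1 * H t.2.2 t.2.1 t.1)
            + ((H t.2.2 t.1 t.2.1)^2 + lam t.2.2 * lam t.1 * H t.2.2 t.1 t.2.1 * H t.1 t.2.2 t.2.1)) := by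
      rw [← Finset.sum_add_distrib, ← Finset.sum_add_distrib]
    linarith [hc1, hc2, h3, hsum3]
  linarith [hT1, hT2, hC, hR, hSA, hSB]
end

section
/- Let n ≥ 2 and m ≥ 1 be integers and 0 < Λ ≤ √2. Let λ₁ ≥ λ₂ ≥ ⋯ ≥ λₙ ≥ 0 be real numbers with λᵢ = 0 whenever i > m, and suppose λ₁λᵢ ≤ Λ for every i ≥ 2. Let h_{α,ij} (1 ≤ α ≤ m, 1 ≤ i,j ≤ n) be real numbers symmetric in the last two indices (h_{α,ij} = h_{α,ji}), and write h_{i,jk} for h_{α,jk} with α = i, interpreted as 0 when i > m. Then Σ_{α=1}^m Σ_{i,j=1}^n h²_{α,ij} + Σ_{i,j=1}^n λᵢ² h²_{i,ij} + Σ_{k=1}^n Σ_{i≠j} λᵢλⱼ h_{i,jk} h_{j,ik} ≥ (1 − Λ/√2) Σ_{α=1}^m Σ_{i,j=1}^n h²_{α,ij} + (1/n) Σ_{j=1}^n (Σ_{i=1}^n λᵢ h_{i,ij})². (This is the algebraic inequality underlying the estimate Δ_M log v ≥ (1 − Λ/√2)|B_M|² + (1/n)|∇ log v|² for minimal graphs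 with 2-dilation bounded by Λ.) -/
/-!
Write `μᵢⱼ = λᵢλⱼ` for `i ≠ j` and `μᵢᵢ = 0`, so that `0 ≤ μᵢⱼ ≤ Λ`. The cross term is a sum
over ordered triples `(i, j, k)`; averaging it over the six permutations of each triple and
using `h_{i,jk} = h_{i,kj}` reduces it, with `a = h_{i,jk}`, `b = h_{j,ki}`, `c = h_{k,ij}`, to
the scalar inequality `μ₁ bc + μ₂ ca + μ₃ ab ≥ -(Λ/√2)(a² + b² + c²)` for `0 ≤ μₗ ≤ Λ`.
Only the negative products matter there, and when two of them are negative, say `ab` and `ac`,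
the bound is `(√2 a + b + c)² + (b - c)² ≥ 0`, with equality at `a = -√2 b = -√2 c`.
Hence the cross term is at least `-(Λ/√2)|B_M|²`, and the Cauchy–Schwarz inequality
`(∑ᵢ xᵢ)² ≤ n ∑ᵢ xᵢ²` bounds the `λᵢ² h²_{i,ij}` term from below by `(1/n)|∇ log v|²`.
-/

open Finset

theorem neg_sum_sq_le_sqrt_two_mul_sum_min_mul (a b c : ℝ) :
    -(a ^ 2 + b ^ 2 + c ^ 2) ≤ √2 * (min (b * c) 0 + min (c * a) 0 + min (a * b) 0) := by
  have hs : √2 ^ 2 = 2 := Real.sq_sqrt zero_le_two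
  have hs2 : √2 ≤ 2 := by nlinarith [Real.sqrt_nonneg 2]
  simp only [min_def]
  split_ifs with h₁ h₂ h₃ h₃ h₂ h₃ h₃
  all_goals first
    | nlinarith [sq_nonneg (√2 * a + b + c), sq_nonneg (b - c)]
    | nlinarith [sq_nonneg (√2 * b + c + a), sq_nonneg (c - a)]
    | nlinarith [sq_nonneg (√2 * c + a + b), sq_nonneg (a - b)]
    | nlinarith [mul_nonneg (sub_nonneg.2 hs2) (neg_nonneg.2 (add_nonpos (add_nonpos h₁ h₂) h₃)),
        sq_nonneg (a + b + c)]

theorem mul_min_zero_le_mul {Λ μ : ℝ} (hμ₀ : 0 ≤ μ) (hμ : μ ≤ Λ) (p : ℝ) :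
    Λ * min p 0 ≤ μ * p := by
  rcases le_total p 0 with hp | hp
  · rw [min_eq_left hp]
    exact mul_le_mul_of_nonpos_right hμ hp
  · rw [min_eq_right hp, mul_zero]
    exact mul_nonneg hμ₀ hp

theorem neg_sum_sq_le_weighted_pair_products {Λ μ₁ μ₂ μ₃ : ℝ}
    (h₁ : 0 ≤ μ₁) (h₁' : μ₁ ≤ Λ) (h₂ : 0 ≤ μ₂) (h₂' : μ₂ ≤ Λ) (h₃ : 0 ≤ μ₃) (h₃' : μ₃ ≤ Λ)
    (a b c : ℝ) :
    -(Λ / √2) * (a ^ 2 + b ^ 2 + c ^ 2) ≤ μ₁ * (b * c) + μ₂ * (c * a) + μ₃ * (a * b) := by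
  have hΛ : 0 ≤ Λ / √2 := div_nonneg (h₁.trans h₁') (Real.sqrt_nonneg 2)
  calc -(Λ / √2) * (a ^ 2 + b ^ 2 + c ^ 2)
      ≤ Λ / √2 * (√2 * (min (b * c) 0 + min (c * a) 0 + min (a * b) 0)) := by
        rw [neg_mul, ← mul_neg]
        exact mul_le_mul_of_nonneg_left (neg_sum_sq_le_sqrt_two_mul_sum_min_mul a b c) hΛ
    _ = Λ * min (b * c) 0 + Λ * min (c * a) 0 + Λ * min (a * b) 0 := by
        field_simp
    _ ≤ μ₁ * (b * c) + μ₂ * (c * a) + μ₃ * (a * b) :=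
        add_le_add (add_le_add (mul_min_zero_le_mul h₁ h₁' _) (mul_min_zero_le_mul h₂ h₂' _))
          (mul_min_zero_le_mul h₃ h₃' _)

theorem sum_sum_sum_add_permutations {ι M : Type*} [Fintype ι] [AddCommMonoid M]
    (f : ι → ι → ι → M) :
    ∑ i, ∑ j, ∑ k, (f i j k + f i k j + f j i k + f j k i + f k i j + f k j i)
      = 6 • ∑ i, ∑ j, ∑ k, f i j k := by
  set S := ∑ i, ∑ j, ∑ k, f i j k
  have e₁ : ∑ i, ∑ j, ∑ k, f i k j = S := sum_congr rfl fun _ _ => sum_comm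
  have e₂ : ∑ i, ∑ j, ∑ k, f j i k = S := sum_comm
  have e₃ : ∑ i, ∑ j, ∑ k, f j k i = S := sum_comm.trans (sum_congr rfl fun _ _ => sum_comm)
  have e₄ : ∑ i, ∑ j, ∑ k, f k i j = S := (sum_congr rfl fun _ _ => sum_comm).trans sum_comm
  have e₅ : ∑ i, ∑ j, ∑ k, f k j i = S :=
    ((sum_congr rfl fun _ _ => sum_comm).trans sum_comm).trans e₁
  simp only [sum_add_distrib, e₁, e₂, e₃, e₄, e₅]
  abel

theorem neg_sum_sq_le_sum_weighted_transpose_mul {ι : Type*} [Fintype ι] {Λ : ℝ}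
    (μ : ι → ι → ℝ) (hμ₀ : ∀ i j, 0 ≤ μ i j) (hμ : ∀ i j, μ i j ≤ Λ)
    (H : ι → ι → ι → ℝ) (hH : ∀ i j k, H i j k = H i k j) :
    -(Λ / √2) * ∑ i, ∑ j, ∑ k, H i j k ^ 2 ≤ ∑ i, ∑ j, ∑ k, μ i j * H i j k * H j i k := by
  set f : ι → ι → ι → ℝ := fun i j k => μ i j * H i j k * H j i k + Λ / √2 * H i j k ^ 2
  have hsym : ∀ i j k, 0 ≤ f i j k + f i k j + f j i k + f j k i + f k i j + f k j i := by
    intro i j k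
    have avg : ∀ p q, 0 ≤ (μ p q + μ q p) / 2 ∧ (μ p q + μ q p) / 2 ≤ Λ := fun p q =>
      ⟨by linarith [hμ₀ p q, hμ₀ q p], by linarith [hμ p q, hμ q p]⟩
    have := neg_sum_sq_le_weighted_pair_products (avg j k).1 (avg j k).2 (avg k i).1 (avg k i).2
      (avg i j).1 (avg i j).2 (H i j k) (H j k i) (H k i j)
    simp only [f, hH i k j, hH j i k, hH k j i]
    linarith
  have h6 := sum_sum_sum_add_permutations f
  have hf : 0 ≤ ∑ i, ∑ j, ∑ k, f i j k := by
    have : 0 ≤ 6 • ∑ i, ∑ j, ∑ k, f i j k :=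
      h6 ▸ sum_nonneg fun i _ => sum_nonneg fun j _ => sum_nonneg fun k _ => hsym i j k
    rw [nsmul_eq_mul, Nat.cast_ofNat] at this
    linarith
  simp only [f, sum_add_distrib, ← mul_sum] at hf
  linarith

theorem neg_sum_sq_le_sum_sum_sum_erase_mul {ι : Type*} [Fintype ι] [DecidableEq ι] {Λ : ℝ}
    (lam : ι → ℝ) (hnonneg : ∀ i, 0 ≤ lam i) (hpair : ∀ i j, i ≠ j → lam i * lam j ≤ Λ)
    (hΛ : 0 ≤ Λ) (H : ι → ι → ι → ℝ) (hH : ∀ i j k, H i j k = H i k j) :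
    -(Λ / √2) * ∑ i, ∑ j, ∑ k, H i j k ^ 2
      ≤ ∑ k, ∑ i, ∑ j ∈ univ.erase i, lam i * lam j * H i j k * H j i k := by
  set μ : ι → ι → ℝ := fun i j => if j ≠ i then lam i * lam j else 0
  have hμ₀ : ∀ i j, 0 ≤ μ i j := fun i j => by
    simp only [μ]
    split_ifs
    exacts [mul_nonneg (hnonneg i) (hnonneg j), le_rfl]
  have hμ : ∀ i j, μ i j ≤ Λ := fun i j => by
    simp only [μ]
    split_ifs with hji
    exacts [hpair i j (Ne.symm hji), hΛ]
  convert neg_sum_sq_le_sum_weighted_transpose_mul μ hμ₀ hμ H hH using 1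
  rw [sum_comm]
  refine sum_congr rfl fun i _ => ?_
  rw [sum_comm, ← filter_ne', sum_filter]
  refine sum_congr rfl fun j _ => ?_
  split_ifs <;> simp [μ, *]

theorem mul_le_of_ne_of_max_mul_le {ι : Type*} {Λ : ℝ} (lam : ι → ℝ) (i₀ : ι)
    (hnonneg : ∀ i, 0 ≤ lam i) (hmax : ∀ i, lam i ≤ lam i₀)
    (hcond : ∀ i, i ≠ i₀ → lam i₀ * lam i ≤ Λ) {i j : ι} (hij : i ≠ j) :
    lam i * lam j ≤ Λ := by
  by_cases hj : j = i₀
  · subst hj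
    rw [mul_comm]
    exact hcond i hij
  · calc lam i * lam j ≤ lam i₀ * lam j := mul_le_mul_of_nonneg_right (hmax i) (hnonneg j)
      _ ≤ Λ := hcond j hj

theorem sum_dite_val_lt_le {n m : ℕ} (G : Fin m → ℝ) (hG : ∀ α, 0 ≤ G α) :
    ∑ i : Fin n, (if hi : (i : ℕ) < m then G ⟨i, hi⟩ else 0) ≤ ∑ α, G α := by
  set g : ℕ → ℝ := fun a => if ha : a < m then G ⟨a, ha⟩ else 0
  have hg : ∀ a, 0 ≤ g a := fun a => by
    simp only [g]
    split_ifs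
    exacts [hG _, le_rfl]
  calc ∑ i : Fin n, g i = ∑ a ∈ range n, g a := Fin.sum_univ_eq_sum_range g n
    _ = ∑ a ∈ range n with a < m, g a :=
        (sum_filter_of_ne fun a _ ha => by by_contra h; exact ha (dif_neg h)).symm
    _ ≤ ∑ a ∈ range m, g a :=
        sum_le_sum_of_subset_of_nonneg (fun a ha => by simp_all) fun a _ _ => hg a
    _ = ∑ α, G α := by
        rw [← Fin.sum_univ_eq_sum_range]
        exact sum_congr rfl fun α _ => dif_pos α.isLt

theorem inv_card_mul_sum_sq_sum_le {ι κ : Type*} [Fintype ι] [Fintype κ] (x : ι → κ → ℝ) :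
    (1 / (Fintype.card ι : ℝ)) * ∑ k, (∑ i, x i k) ^ 2 ≤ ∑ i, ∑ k, x i k ^ 2 := by
  rw [sum_comm (f := fun i k => x i k ^ 2)]
  rcases eq_or_ne (Fintype.card ι : ℝ) 0 with hc | hc
  · rw [hc, div_zero, zero_mul]
    positivity
  · calc (1 / (Fintype.card ι : ℝ)) * ∑ k, (∑ i, x i k) ^ 2
        ≤ (1 / (Fintype.card ι : ℝ)) * ∑ k, (Fintype.card ι * ∑ i, x i k ^ 2) := by
          gcongr with k
          simpa using sq_sum_le_card_mul_sum_sq (s := univ) (f := fun i => x i k)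
      _ = ∑ k, ∑ i, x i k ^ 2 := by
          rw [← mul_sum, ← mul_assoc, one_div_mul_cancel hc, one_mul]

/-- Indices are 0-based: `lam ⟨0, _⟩` is `λ₁`, and `H i j k` is `h_{i,jk}`, which vanishes for
`i ≥ m`. -/
theorem log_slope_laplacian_inequality_small_dilation
    (n m : ℕ) (hn : 2 ≤ n)
    (Λ : ℝ) (hΛ0 : 0 < Λ)
    (lam : Fin n → ℝ)
    (hnonneg : ∀ i, 0 ≤ lam i)
    (hmono : ∀ i j : Fin n, i ≤ j → lam j ≤ lam i)
    (hcond : ∀ i : Fin n, (i : ℕ) ≠ 0 → lam ⟨0, by omega⟩ * lam i ≤ Λ)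
    (h : Fin m → Fin n → Fin n → ℝ)
    (hsymm : ∀ α i j, h α i j = h α j i)
    (H : Fin n → Fin n → Fin n → ℝ)
    (hH : ∀ i j k, H i j k = if hi : (i : ℕ) < m then h ⟨(i : ℕ), hi⟩ j k else 0) :
    (∑ α : Fin m, ∑ i : Fin n, ∑ j : Fin n, (h α i j) ^ 2)
      + (∑ i : Fin n, ∑ j : Fin n, (lam i) ^ 2 * (H i i j) ^ 2)
      + (∑ k : Fin n, ∑ i : Fin n, ∑ j ∈ univ.erase i,
          lam i * lam j * H i j k * H j i k)
    ≥ (1 - Λ / Real.sqrt 2)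
        * (∑ α : Fin m, ∑ i : Fin n, ∑ j : Fin n, (h α i j) ^ 2)
      + (1 / (n : ℝ)) * ∑ j : Fin n, (∑ i : Fin n, lam i * H i i j) ^ 2 := by
  have hpair : ∀ i j : Fin n, i ≠ j → lam i * lam j ≤ Λ := fun i j =>
    mul_le_of_ne_of_max_mul_le lam ⟨0, by omega⟩ hnonneg (fun i => hmono _ i (Nat.zero_le i))
      fun i hi => hcond i fun h0 => hi (Fin.ext h0)
  have hHsymm : ∀ i j k, H i j k = H i k j := fun i j k => by
    simp only [hH]
    split_ifs
    exacts [hsymm _ j k, rfl]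
  have hcross := neg_sum_sq_le_sum_sum_sum_erase_mul lam hnonneg hpair hΛ0.le H hHsymm
  have hHh : ∑ i, ∑ j, ∑ k, H i j k ^ 2 ≤ ∑ α : Fin m, ∑ i, ∑ j, h α i j ^ 2 := by
    calc ∑ i, ∑ j, ∑ k, H i j k ^ 2
        = ∑ i : Fin n, if hi : (i : ℕ) < m then ∑ j, ∑ k, h ⟨i, hi⟩ j k ^ 2 else 0 :=
          sum_congr rfl fun i _ => by simp only [hH]; split_ifs <;> simp
      _ ≤ _ := sum_dite_val_lt_le (fun α => ∑ j, ∑ k, h α j k ^ 2) fun α => by positivity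
  have hcs := inv_card_mul_sum_sq_sum_le fun i j => lam i * H i i j
  simp only [Fintype.card_fin, mul_pow] at hcs
  have hΛH := mul_le_mul_of_nonneg_left hHh (div_nonneg hΛ0.le (Real.sqrt_nonneg 2))
  linarith
end

section
/- Let μ₁, μ₂, μ₃ > 0 and set μ* = max(μ₁, μ₂, μ₃). Suppose that for all i ≠ j one has μᵢ μⱼ (μ* − 1) ≤ 2 μ* (equivalently μᵢμⱼ ≤ 2 + 2/(μ* − 1) when μ* > 1; the condition is automatic when μ* ≤ 1). Then φ(μ₁, μ₂, μ₃) := 4 + μ₁μ₂μ₃ − μ₁μ₂ − μ₁μ₃ − μ₂μ₃ ≥ 0. -/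
/-! Let `c` be the largest of the three numbers and `a`, `b` the others. For `c ≤ 1` every
pairwise product is at most `1`, so `φ ≥ 1`. For `c > 1`, completing the product gives
`(c - 1) φ = (c - a(c - 1))(c - b(c - 1)) - (c - 2)²`, and the hypotheses on the two pairs
containing `c` say exactly `a(c - 1) ≤ 2`, `b(c - 1) ≤ 2`; together with `a, b ≤ c` this makes
each factor at least `|c - 2|`. -/

lemma sub_one_mul_phi_eq (a b c : ℝ) :
    (c - 1) * (4 + a * b * c - a * b - a * c - b * c)
      = (c - a * (c - 1)) * (c - b * (c - 1)) - (c - 2) ^ 2 := by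
  ring

lemma abs_sub_two_le_sub_mul {a c : ℝ} (hac : a ≤ c) (hc : 1 ≤ c) (h : a * (c - 1) ≤ 2) :
    |c - 2| ≤ c - a * (c - 1) := by
  rcases le_total 2 c with h2 | h2
  · rw [abs_of_nonneg (by linarith)]; linarith
  · rw [abs_of_nonpos (by linarith)]; nlinarith

lemma phi_nonneg_of_le_of_le {a b c : ℝ} (ha : 0 ≤ a) (hb : 0 ≤ b) (hac : a ≤ c) (hbc : b ≤ c)
    (hac' : a * c * (c - 1) ≤ 2 * c) (hbc' : b * c * (c - 1) ≤ 2 * c) :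
    0 ≤ 4 + a * b * c - a * b - a * c - b * c := by
  rcases le_or_gt c 1 with hc | hc
  · have hab : a * b ≤ 1 := mul_le_one₀ (hac.trans hc) hb (hbc.trans hc)
    have hac1 : a * c ≤ 1 := mul_le_one₀ (hac.trans hc) (ha.trans hac) hc
    have hbc1 : b * c ≤ 1 := mul_le_one₀ (hbc.trans hc) (ha.trans hac) hc
    nlinarith [mul_nonneg (mul_nonneg ha hb) (ha.trans hac)]
  · have hc0 : 0 < c := by linarith
    have hx := abs_sub_two_le_sub_mul hac hc.le (le_of_mul_le_mul_right (by linarith) hc0)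
    have hy := abs_sub_two_le_sub_mul hbc hc.le (le_of_mul_le_mul_right (by linarith) hc0)
    have hprod : (c - 2) ^ 2 ≤ (c - a * (c - 1)) * (c - b * (c - 1)) := by
      rw [← sq_abs, sq]
      exact mul_le_mul hx hy (abs_nonneg _) ((abs_nonneg _).trans hx)
    refine nonneg_of_mul_nonneg_right (a := c - 1) ?_ (by linarith)
    rw [sub_one_mul_phi_eq]
    linarith

/-- **Lemma 9.2 (Appendix I)**. If `μ₁, μ₂, μ₃ > 0` and, with `μ* = max(μ₁,μ₂,μ₃)`,
`μᵢμⱼ(μ* − 1) ≤ 2μ*` for all `i ≠ j`, then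
`φ(μ₁,μ₂,μ₃) = 4 + μ₁μ₂μ₃ − μ₁μ₂ − μ₁μ₃ − μ₂μ₃ ≥ 0`. -/
theorem phi_nonneg
    (μ₁ μ₂ μ₃ : ℝ) (h1 : 0 < μ₁) (h2 : 0 < μ₂) (h3 : 0 < μ₃)
    (h12 : μ₁ * μ₂ * (max μ₁ (max μ₂ μ₃) - 1) ≤ 2 * max μ₁ (max μ₂ μ₃))
    (h13 : μ₁ * μ₃ * (max μ₁ (max μ₂ μ₃) - 1) ≤ 2 * max μ₁ (max μ₂ μ₃))
    (h23 : μ₂ * μ₃ * (max μ₁ (max μ₂ μ₃) - 1) ≤ 2 * max μ₁ (max μ₂ μ₃)) :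
    0 ≤ 4 + μ₁ * μ₂ * μ₃ - μ₁ * μ₂ - μ₁ * μ₃ - μ₂ * μ₃ := by
  have hle : μ₁ ≤ max μ₁ (max μ₂ μ₃) ∧ μ₂ ≤ max μ₁ (max μ₂ μ₃) ∧ μ₃ ≤ max μ₁ (max μ₂ μ₃) := by
    simp
  have hM : max μ₁ (max μ₂ μ₃) = μ₁ ∨ max μ₁ (max μ₂ μ₃) = μ₂ ∨ max μ₁ (max μ₂ μ₃) = μ₃ := by
    rcases max_choice μ₂ μ₃ with h | h <;> rcases max_choice μ₁ (max μ₂ μ₃) with h' | h' <;> simp_all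
  generalize max μ₁ (max μ₂ μ₃) = M at h12 h13 h23 hle hM
  obtain ⟨hμ₁, hμ₂, hμ₃⟩ := hle
  rcases hM with rfl | rfl | rfl
  · linarith [phi_nonneg_of_le_of_le h2.le h3.le hμ₂ hμ₃ (by linarith) (by linarith)]
  · linarith [phi_nonneg_of_le_of_le h1.le h3.le hμ₁ hμ₃ (by linarith) (by linarith)]
  · exact phi_nonneg_of_le_of_le h1.le h2.le hμ₁ hμ₂ h13 h23
end

section
/- Let 0 < Λ ≤ √2 and let μ₁, μ₂, μ₃ > 0 satisfy μᵢ μⱼ ≤ Λ² for all i ≠ j. Then φ(μ₁, μ₂, μ₃) := 4 + μ₁μ₂μ₃ − μ₁μ₂ − μ₁μ₃ − μ₂μ₃ ≥ (2 − √2)(2 − Λ²). -/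
private lemma phi_key
    (Λ : ℝ) (hΛ0 : 0 < Λ) (hΛ : Λ ≤ Real.sqrt 2)
    (μ₁ μ₂ μ₃ : ℝ) (h1 : 0 < μ₁) (h2 : 0 < μ₂) (h3 : 0 < μ₃)
    (ho1 : μ₁ ≤ μ₂) (ho2 : μ₂ ≤ μ₃)
    (h23 : μ₂ * μ₃ ≤ Λ ^ 2) :
    (2 - Real.sqrt 2) * (2 - Λ ^ 2)
      ≤ 4 + μ₁ * μ₂ * μ₃ - μ₁ * μ₂ - μ₁ * μ₃ - μ₂ * μ₃ := by
  set s := Real.sqrt 2 with hs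
  have hs2 : s ^ 2 = 2 := Real.sq_sqrt (by norm_num)
  have hs1 : 1 ≤ s := by
    nlinarith [Real.sqrt_nonneg 2]
  have hs32 : s ≤ 3 / 2 := by nlinarith [Real.sqrt_nonneg 2]
  have hΛ2 : Λ ^ 2 ≤ 2 := by nlinarith
  have hP2 : μ₂ * μ₃ ≤ 2 := h23.trans hΛ2
  by_cases hc : μ₂ + μ₃ ≤ μ₂ * μ₃
  · have hnn : 0 ≤ μ₁ * (μ₂ * μ₃ - μ₂ - μ₃) := mul_nonneg h1.le (by linarith)
    nlinarith [mul_nonneg (sub_nonneg.2 hs1) (sub_nonneg.2 h23)]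
  · push_neg at hc
    have key : μ₁ * (μ₂ + μ₃ - μ₂ * μ₃) ≤ μ₂ * (μ₂ + μ₃ - μ₂ * μ₃) := by
      apply mul_le_mul_of_nonneg_right ho1 (by linarith)
    by_cases hm : 1 ≤ μ₃
    · -- μ₂*(S−P) = μ₂²(1−μ₃)+P ≤ P ≤ 2 ≤ 2√2−(√2−1)P
      nlinarith [sq_nonneg μ₂, mul_nonneg (sq_nonneg μ₂) (sub_nonneg.2 hm),
        mul_nonneg (sub_nonneg.2 hs1) (sub_nonneg.2 h23)]
    · push_neg at hm
      have h2' : μ₂ < 1 := lt_of_le_of_lt ho2 hm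
      have h1' : μ₁ < 1 := lt_of_le_of_lt ho1 h2'
      have hP1 : μ₂ * μ₃ ≤ 1 := by nlinarith
      nlinarith [mul_nonneg (sq_nonneg μ₂) (sub_nonneg.2 hm.le),
        mul_nonneg (sub_nonneg.2 hs1) (sub_nonneg.2 h23),
        mul_nonneg (sub_nonneg.2 hs1) (sub_nonneg.2 hP1)]

/-- **Corollary 9.4 (Appendix I)**. If `0 < Λ ≤ √2` and `μ₁, μ₂, μ₃ > 0` satisfy
`μᵢμⱼ ≤ Λ²` for all `i ≠ j`, then
`φ(μ₁,μ₂,μ₃) = 4 + μ₁μ₂μ₃ − μ₁μ₂ − μ₁μ₃ − μ₂μ₃ ≥ (2 − √2)(2 − Λ²)`. -/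
theorem phi_lower_bound
    (Λ : ℝ) (hΛ0 : 0 < Λ) (hΛ : Λ ≤ Real.sqrt 2)
    (μ₁ μ₂ μ₃ : ℝ) (h1 : 0 < μ₁) (h2 : 0 < μ₂) (h3 : 0 < μ₃)
    (h12 : μ₁ * μ₂ ≤ Λ ^ 2) (h13 : μ₁ * μ₃ ≤ Λ ^ 2) (h23 : μ₂ * μ₃ ≤ Λ ^ 2) :
    (2 - Real.sqrt 2) * (2 - Λ ^ 2)
      ≤ 4 + μ₁ * μ₂ * μ₃ - μ₁ * μ₂ - μ₁ * μ₃ - μ₂ * μ₃ := by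
  rcases le_total μ₁ μ₂ with a12 | a21 <;>
  rcases le_total μ₂ μ₃ with a23 | a32 <;>
  rcases le_total μ₁ μ₃ with a13 | a31
  · have := phi_key Λ hΛ0 hΛ μ₁ μ₂ μ₃ h1 h2 h3 a12 a23 h23; nlinarith [this]
  · have := phi_key Λ hΛ0 hΛ μ₁ μ₂ μ₃ h1 h2 h3 a12 a23 h23; nlinarith [this]
  · have := phi_key Λ hΛ0 hΛ μ₁ μ₃ μ₂ h1 h3 h2 a13 a32 (by linarith [h23] : μ₃ * μ₂ ≤ Λ ^ 2); nlinarith [this]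
  · have := phi_key Λ hΛ0 hΛ μ₃ μ₁ μ₂ h3 h1 h2 a31 a12 h12; nlinarith [this]
  · have := phi_key Λ hΛ0 hΛ μ₂ μ₁ μ₃ h2 h1 h3 a21 a13 h13; nlinarith [this]
  · have := phi_key Λ hΛ0 hΛ μ₂ μ₃ μ₁ h2 h3 h1 a23 a31 (by linarith [h13] : μ₃ * μ₁ ≤ Λ ^ 2); nlinarith [this]
  · have := phi_key Λ hΛ0 hΛ μ₃ μ₂ μ₁ h3 h2 h1 a32 a21 (by linarith [h12] : μ₂ * μ₁ ≤ Λ ^ 2); nlinarith [this]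
  · have := phi_key Λ hΛ0 hΛ μ₃ μ₂ μ₁ h3 h2 h1 a32 a21 (by linarith [h12] : μ₂ * μ₁ ≤ Λ ^ 2); nlinarith [this]
end

section
/- Let λ₁ ≥ λ₂ ≥ λ₃ ≥ 0 be real numbers with λ₁²λᵢ² ≤ 2 + λᵢ² for i = 2, 3. Then for all real x, y, z one has x² + y² + z² + λ₁λ₂·xy + λ₂λ₃·yz + λ₁λ₃·xz ≥ 0; equivalently, the symmetric 3×3 matrix with diagonal entries 2 and off-diagonal entries (1,2) ↦ λ₁λ₂, (1,3) ↦ λ₁λ₃, (2,3) ↦ λ₂λ₃ is positive semidefinite. -/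
private lemma det_key (u v w : ℝ) (hw : 0 ≤ w) (hwv : w ≤ v) (hvu : v ≤ u)
    (h2 : u*v ≤ 2+v) :
    u*v + u*w + v*w ≤ 4 + u*v*w := by
  have hv : 0 ≤ v := le_trans hw hwv
  have hv2 : v ≤ 2 := by nlinarith
  rcases le_or_gt (u+v) (u*v) with h | h
  · have h1 : 0 ≤ w * (u*v - u - v) := mul_nonneg hw (by linarith)
    nlinarith
  · have h1 : 0 ≤ (2 + v - u*v) * (2 - v) := mul_nonneg (by linarith) (by linarith)
    have h2' : 0 ≤ (v - w) * (u + v - u*v) := mul_nonneg (by linarith) (by linarith)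
    nlinarith

/-- **Positive semidefiniteness of the quadratic form in the proof of Lemma 6.1**.
If `λ₁ ≥ λ₂ ≥ λ₃ ≥ 0` and `λ₁²λᵢ² ≤ 2 + λᵢ²` for `i = 2, 3`, then the quadratic form
`f(x,y,z) = x² + y² + z² + λ₁λ₂ xy + λ₂λ₃ yz + λ₁λ₃ xz` is nonnegative. -/
theorem quadratic_form_nonneg
    (l₁ l₂ l₃ : ℝ) (h3 : 0 ≤ l₃) (h32 : l₃ ≤ l₂) (h21 : l₂ ≤ l₁)
    (hc2 : l₁ ^ 2 * l₂ ^ 2 ≤ 2 + l₂ ^ 2)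
    (hc3 : l₁ ^ 2 * l₃ ^ 2 ≤ 2 + l₃ ^ 2) :
    ∀ x y z : ℝ,
      0 ≤ x ^ 2 + y ^ 2 + z ^ 2 + l₁ * l₂ * (x * y) + l₂ * l₃ * (y * z)
          + l₁ * l₃ * (x * z) := by
  intro x y z
  set a := l₁ * l₂ with ha
  set b := l₂ * l₃ with hb
  set c := l₁ * l₃ with hc
  have h2 : 0 ≤ l₂ := le_trans h3 h32
  have h1 : 0 ≤ l₁ := le_trans h2 h21
  -- squares
  have hwv : l₃ ^ 2 ≤ l₂ ^ 2 := by nlinarith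
  have hvu : l₂ ^ 2 ≤ l₁ ^ 2 := by nlinarith
  have hw0 : (0:ℝ) ≤ l₃ ^ 2 := sq_nonneg _
  have hdet := det_key (l₁^2) (l₂^2) (l₃^2) hw0 hwv hvu hc2
  have hD : 0 ≤ 4 + a*b*c - a^2 - b^2 - c^2 := by
    have habc : a * b * c = l₁^2 * l₂^2 * l₃^2 := by ring
    have ha2 : a^2 = l₁^2 * l₂^2 := by ring
    have hb2 : b^2 = l₂^2 * l₃^2 := by ring
    have hc2' : c^2 = l₁^2 * l₃^2 := by ring
    rw [habc, ha2, hb2, hc2']; linarith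
  have ha2le : a^2 ≤ 4 := by
    have : a^2 = l₁^2 * l₂^2 := by ring
    have hv2 : l₂^2 ≤ 2 := by nlinarith
    linarith [this ▸ hc2]
  rcases lt_or_eq_of_le ha2le with hlt | heq
  · -- nondegenerate case: (4-a²)·4f = (4-a²)(2x+ay+cz)² + ((4-a²)y+(2b-ac)z)² + 4Dz²
    have hk : (0:ℝ) < 4 - a^2 := by linarith
    have hid : (4 - a^2) * (4 * (x ^ 2 + y ^ 2 + z ^ 2 + a * (x * y) + b * (y * z)
          + c * (x * z))) =
        (4 - a^2) * (2*x + a*y + c*z)^2 + ((4 - a^2)*y + (2*b - a*c)*z)^2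
          + 4 * (4 + a*b*c - a^2 - b^2 - c^2) * z^2 := by ring
    have hrhs : 0 ≤ (4 - a^2) * (2*x + a*y + c*z)^2 + ((4 - a^2)*y + (2*b - a*c)*z)^2
          + 4 * (4 + a*b*c - a^2 - b^2 - c^2) * z^2 := by
      have := mul_nonneg hk.le (sq_nonneg (2*x + a*y + c*z))
      have := sq_nonneg ((4 - a^2)*y + (2*b - a*c)*z)
      have := mul_nonneg (by linarith : (0:ℝ) ≤ 4 * (4 + a*b*c - a^2 - b^2 - c^2))
        (sq_nonneg z)
      linarith
    have hmul : 0 ≤ (4 - a^2) * (4 * (x ^ 2 + y ^ 2 + z ^ 2 + a * (x * y) + b * (y * z)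
          + c * (x * z))) := hid ▸ hrhs
    nlinarith [hmul, hk]
  · -- degenerate case: a² = 4, so l₁² = l₂² = 2, l₁ = l₂, b = c
    have hu2 : l₁^2 * l₂^2 = 4 := by
      rw [show l₁^2 * l₂^2 = a^2 from by rw [ha]; ring, heq]
    have hv2 : (l₂^2)^2 ≤ 4 := by nlinarith
    have hvle : l₂^2 ≤ 2 := by nlinarith
    have hveq : l₂^2 = 2 := by linarith
    have hueq : l₁^2 = 2 := by
      have e : l₁^2 * l₂^2 = l₁^2 * 2 := by rw [hveq]
      linarith
    have hp1 : l₁ * l₂ ≤ 2 := by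
      have e : (l₁ - l₂)^2 = l₁^2 + l₂^2 - 2*(l₁*l₂) := by ring
      have h0 := sq_nonneg (l₁ - l₂)
      rw [e] at h0
      linarith
    have hp2 : 2 ≤ l₁ * l₂ := by
      have e : (l₁ - l₂) * l₂ = l₁*l₂ - l₂^2 := by ring
      have h0 : 0 ≤ (l₁ - l₂) * l₂ := mul_nonneg (by linarith) h2
      rw [e] at h0
      linarith
    have hl12 : l₁ = l₂ := by
      have h0 : (l₁ - l₂)^2 ≤ 0 := by
        have e : (l₁ - l₂)^2 = l₁^2 + l₂^2 - 2*(l₁*l₂) := by ring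
        rw [e]; linarith
      have h0' : (l₁ - l₂)^2 = 0 := le_antisymm h0 (sq_nonneg _)
      have := pow_eq_zero_iff (M₀ := ℝ) (n := 2) (by norm_num) |>.mp h0'
      linarith
    have hbc : b = c := by rw [hb, hc, hl12]
    have ha2 : a = 2 := by rw [ha]; linarith
    have hb2le : b^2 ≤ 4 := by
      have e : b^2 = l₂^2 * l₃^2 := by rw [hb]; ring
      have e2 : l₂^2 * l₃^2 ≤ 2 * l₃^2 := by
        rw [hveq]
      rw [e]; linarith
    have hid : 4 * (x ^ 2 + y ^ 2 + z ^ 2 + 2 * (x * y) + b * (y * z) + b * (x * z)) =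
        (2*x + 2*y + b*z)^2 + (4 - b^2) * z^2 := by ring
    have hrhs : 0 ≤ (2*x + 2*y + b*z)^2 + (4 - b^2) * z^2 := by
      have h5 := sq_nonneg (2*x + 2*y + b*z)
      have h6 := mul_nonneg (by linarith : (0:ℝ) ≤ 4 - b^2) (sq_nonneg z)
      linarith
    rw [ha2, ← hbc]
    linarith [hid ▸ hrhs]
end

section
/- For every integer n ≥ 2 and every real Λ > 0 there exists a constant c > 0, depending only on n and Λ, such that for all nonnegative reals λ₁, …, λₙ with λᵢλⱼ ≤ Λ whenever i ≠ j, one has Σ_{i=1}^n (λᵢ²/(1 + λᵢ²)) · ∏_{j ≠ i} (1 + λⱼ²) ≤ c. -/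
open Finset

/-- **The key elementary inequality in the volume growth estimate** (proof of Lemma 3.1).
For every `n ≥ 2` and `Λ > 0` there is a constant `c > 0` depending only on `n` and `Λ`
such that whenever `λ₁, …, λₙ ≥ 0` satisfy `λᵢλⱼ ≤ Λ` for `i ≠ j`, one has
`Σᵢ (λᵢ²/(1+λᵢ²)) ∏_{j≠i} (1+λⱼ²) ≤ c`. -/
theorem volume_growth_key_inequality
    (n : ℕ) (hn : 2 ≤ n) (Λ : ℝ) (hΛ : 0 < Λ) :
    ∃ c : ℝ, 0 < c ∧
      ∀ lam : Fin n → ℝ, (∀ i, 0 ≤ lam i) →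
        (∀ i j : Fin n, i ≠ j → lam i * lam j ≤ Λ) →
        ∑ i : Fin n, (lam i ^ 2 / (1 + lam i ^ 2))
            * ∏ j ∈ univ.erase i, (1 + lam j ^ 2) ≤ c := by
  refine ⟨n * ((1 + Λ ^ 2) * (1 + Λ) ^ (n - 1)), by positivity, ?_⟩
  intro lam hpos hpair
  have hne : (univ : Finset (Fin n)).Nonempty := ⟨⟨0, by omega⟩, mem_univ _⟩
  obtain ⟨k, -, hk⟩ := Finset.exists_max_image univ lam hne
  have hΛ1 : (1 : ℝ) ≤ 1 + Λ := by linarith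
  -- each λⱼ with j ≠ k satisfies λⱼ² ≤ Λ
  have hsq : ∀ j : Fin n, j ≠ k → lam j ^ 2 ≤ Λ := by
    intro j hj
    have h1 : lam j ^ 2 ≤ lam j * lam k := by
      have := mul_le_mul_of_nonneg_left (hk j (mem_univ j)) (hpos j)
      nlinarith [hpos j]
    exact h1.trans (hpair j k hj)
  have key : ∀ i : Fin n,
      (lam i ^ 2 / (1 + lam i ^ 2)) * ∏ j ∈ univ.erase i, (1 + lam j ^ 2)
        ≤ (1 + Λ ^ 2) * (1 + Λ) ^ (n - 1) := by
    intro i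
    have hden : (0 : ℝ) < 1 + lam i ^ 2 := by positivity
    by_cases hik : i = k
    · -- all factors of the product are ≤ 1 + Λ
      subst hik
      have hprod : ∏ j ∈ univ.erase i, (1 + lam j ^ 2) ≤ (1 + Λ) ^ (n - 1) := by
        calc ∏ j ∈ univ.erase i, (1 + lam j ^ 2)
            ≤ ∏ _j ∈ univ.erase i, (1 + Λ) := by
              refine Finset.prod_le_prod (fun j _ => by positivity) ?_
              intro j hj
              have := hsq j (Finset.ne_of_mem_erase hj)
              linarith
          _ = (1 + Λ) ^ (n - 1) := by
              rw [Finset.prod_const, Finset.card_erase_of_mem (mem_univ i),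
                Finset.card_univ, Fintype.card_fin]
      have hq : lam i ^ 2 / (1 + lam i ^ 2) ≤ 1 := by
        rw [div_le_one hden]; linarith
      have hprodpos : (0 : ℝ) ≤ ∏ j ∈ univ.erase i, (1 + lam j ^ 2) :=
        Finset.prod_nonneg fun j _ => by positivity
      calc (lam i ^ 2 / (1 + lam i ^ 2)) * ∏ j ∈ univ.erase i, (1 + lam j ^ 2)
          ≤ 1 * ((1 + Λ) ^ (n - 1)) := by
            apply mul_le_mul hq hprod hprodpos zero_le_one
        _ ≤ (1 + Λ ^ 2) * (1 + Λ) ^ (n - 1) := by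
            have : (0:ℝ) ≤ (1 + Λ) ^ (n - 1) := by positivity
            nlinarith
    · -- split off the factor at k
      have hkmem : k ∈ univ.erase i := Finset.mem_erase.2 ⟨fun h => hik h.symm, mem_univ k⟩
      rw [← Finset.mul_prod_erase _ _ hkmem]
      have hrest : ∏ j ∈ (univ.erase i).erase k, (1 + lam j ^ 2) ≤ (1 + Λ) ^ (n - 2) := by
        calc ∏ j ∈ (univ.erase i).erase k, (1 + lam j ^ 2)
            ≤ ∏ _j ∈ (univ.erase i).erase k, (1 + Λ) := by
              refine Finset.prod_le_prod (fun j _ => by positivity) ?_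
              intro j hj
              have := hsq j (Finset.ne_of_mem_erase hj)
              linarith
          _ = (1 + Λ) ^ (n - 2) := by
              rw [Finset.prod_const, Finset.card_erase_of_mem hkmem,
                Finset.card_erase_of_mem (mem_univ i), Finset.card_univ, Fintype.card_fin]
              congr 1
      have hpair2 : lam i ^ 2 / (1 + lam i ^ 2) * (1 + lam k ^ 2) ≤ 1 + Λ ^ 2 := by
        rw [div_mul_eq_mul_div, div_le_iff₀ hden]
        have h1 : lam i * lam k ≤ Λ := hpair i k hik
        nlinarith [hpos i, hpos k, mul_nonneg (hpos i) (hpos k)]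
      have hrestpos : (0 : ℝ) ≤ ∏ j ∈ (univ.erase i).erase k, (1 + lam j ^ 2) :=
        Finset.prod_nonneg fun j _ => by positivity
      have hpairpos : (0 : ℝ) ≤ lam i ^ 2 / (1 + lam i ^ 2) * (1 + lam k ^ 2) := by positivity
      calc lam i ^ 2 / (1 + lam i ^ 2) * ((1 + lam k ^ 2) *
              ∏ j ∈ (univ.erase i).erase k, (1 + lam j ^ 2))
          = (lam i ^ 2 / (1 + lam i ^ 2) * (1 + lam k ^ 2)) *
              ∏ j ∈ (univ.erase i).erase k, (1 + lam j ^ 2) := by ring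
        _ ≤ (1 + Λ ^ 2) * (1 + Λ) ^ (n - 2) :=
            mul_le_mul hpair2 hrest hrestpos (by positivity)
        _ ≤ (1 + Λ ^ 2) * (1 + Λ) ^ (n - 1) := by
            have := pow_le_pow_right₀ hΛ1 (by omega : n - 2 ≤ n - 1)
            nlinarith [this, sq_nonneg Λ]
  calc ∑ i : Fin n, (lam i ^ 2 / (1 + lam i ^ 2)) * ∏ j ∈ univ.erase i, (1 + lam j ^ 2)
      ≤ ∑ _i : Fin n, (1 + Λ ^ 2) * (1 + Λ) ^ (n - 1) :=
        Finset.sum_le_sum fun i _ => key i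
    _ = n * ((1 + Λ ^ 2) * (1 + Λ) ^ (n - 1)) := by
        rw [Finset.sum_const, Finset.card_univ, Fintype.card_fin, nsmul_eq_mul]
end

section
/- Let M = {(x, y, eˣ cos y, −eˣ sin y) : (x, y) ∈ ℝ²} ⊆ ℝ⁴ (the graph of the gradient of the harmonic function φ(x,y) = eˣ cos y, a special Lagrangian and hence minimal surface). Then for every r ≥ e, the 2-dimensional Hausdorff measure satisfies ℋ²(M ∩ B̄(0, √3·r)) ≥ r(r² − 1), where B̄(0, √3·r) is the closed ball in ℝ⁴ of radius √3·r centered at the origin. In particular, M has volume growth strictly faster than Euclidean (quadratic) growth. -/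
/-!
Rotating the last two coordinates of `ℝ⁴` by an angle `θ` and projecting onto them is a
`1`-Lipschitz map to the plane which sends the point of `M` over `(x, y)` to the point with polar
coordinates `(eˣ, θ - y)`. Hence the piece of `M` over `(a, b) × (c, c + w)` has area at least that
of the annular sector with radii `eᵃ < eᵇ` and opening `w ≤ 2π`, namely `w (e²ᵇ - e²ᵃ) / 2`.
Over `[0, log r] × [-n/2, n/2]` with `n = ⌈2r⌉` there are `n` disjoint such pieces of opening `1`,
so this part of `M` has area at least `n (r² - 1) / 2 ≥ r (r² - 1)`; since `log r ≤ r / e`, it lies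
in the ball of radius `√3 r`.
-/

open MeasureTheory Metric

noncomputable section

/-- The special Lagrangian surface `M = {(x, y, eˣ cos y, −eˣ sin y)} ⊆ ℝ⁴`, the graph of
the gradient of the harmonic function `φ(x,y) = eˣ cos y`. -/
def expGraph : Set (EuclideanSpace ℝ (Fin 4)) :=
  {p | ∃ x y : ℝ, p = (WithLp.equiv 2 (Fin 4 → ℝ)).symm
    ![x, y, Real.exp x * Real.cos y, -(Real.exp x * Real.sin y)]}

open Set Real
open scoped ENNReal

theorem lintegral_ofReal_Ioo {a b : ℝ} (ha : 0 ≤ a) (hab : a ≤ b) :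
    ∫⁻ x in Ioo a b, ENNReal.ofReal x = ENNReal.ofReal ((b ^ 2 - a ^ 2) / 2) := by
  rw [← ofReal_integral_eq_lintegral_ofReal, ← integral_Ioc_eq_integral_Ioo,
    ← intervalIntegral.integral_of_le hab, integral_id]
  · exact continuous_id.integrableOn_Icc.mono_set Ioo_subset_Icc_self
  · filter_upwards [ae_restrict_mem measurableSet_Ioo] with x hx using ha.trans hx.1.le

theorem volume_polarCoord_symm_image_Ioo_prod_Ioo {a b α β : ℝ} (ha : 0 ≤ a) (hab : a ≤ b)
    (hα : -π ≤ α) (hβ : β ≤ π) :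
    volume (polarCoord.symm '' (Ioo a b ×ˢ Ioo α β)) =
      ENNReal.ofReal ((b ^ 2 - a ^ 2) / 2) * ENNReal.ofReal (β - α) := by
  set s := Ioo a b ×ˢ Ioo α β
  have hs : MeasurableSet s := measurableSet_Ioo.prod measurableSet_Ioo
  have hst : s ⊆ polarCoord.target :=
    prod_mono (fun ρ hρ => ha.trans_lt hρ.1) (Ioo_subset_Ioo hα hβ)
  calc volume (polarCoord.symm '' s) = ∫⁻ p in s, ENNReal.ofReal p.1 := by
        rw [← setLIntegral_one, lintegral_image_eq_lintegral_abs_det_fderiv_mul volume hs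
          (fun p _ => (hasFDerivAt_polarCoord_symm p).hasFDerivWithinAt)
          (polarCoord.symm.injOn.mono hst)]
        refine setLIntegral_congr_fun hs fun p hp => ?_
        rw [det_fderivPolarCoordSymm, abs_of_pos (hst hp).1, mul_one]
    _ = (∫⁻ ρ in Ioo a b, ENNReal.ofReal ρ) * volume (Ioo α β) := by
        rw [Measure.volume_eq_prod, ← Measure.prod_restrict]
        simpa using lintegral_prod_mul (μ := volume.restrict (Ioo a b))
          (ν := volume.restrict (Ioo α β)) (f := ENNReal.ofReal) (g := 1)
          (by fun_prop) aemeasurable_const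
    _ = _ := by rw [lintegral_ofReal_Ioo ha hab, volume_Ioo]

theorem sq_add_sq_le_norm_sq {ι : Type*} [Fintype ι] (p : EuclideanSpace ℝ ι) {i j : ι}
    (hij : i ≠ j) : p i ^ 2 + p j ^ 2 ≤ ‖p‖ ^ 2 := by
  classical
  rw [EuclideanSpace.norm_sq_eq]
  simp only [Real.norm_eq_abs, sq_abs]
  rw [← Finset.sum_pair (f := fun k => p k ^ 2) hij]
  exact Finset.sum_le_univ_sum_of_nonneg fun k => sq_nonneg _

theorem lipschitzWith_one_mul_add_mul {ι : Type*} [Fintype ι] {i j : ι} (hij : i ≠ j)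
    {a b : ℝ} (hab : a ^ 2 + b ^ 2 = 1) :
    LipschitzWith 1 fun p : EuclideanSpace ℝ ι => a * p i + b * p j := by
  refine LipschitzWith.of_dist_le_mul fun p q => ?_
  rw [NNReal.coe_one, one_mul, Real.dist_eq, dist_eq_norm]
  refine abs_le_of_sq_le_sq ?_ (norm_nonneg _)
  have hpq := sq_add_sq_le_norm_sq (p - q) hij
  simp only [PiLp.sub_apply] at hpq
  nlinarith [sq_nonneg (a * (p j - q j) - b * (p i - q i))]

def expGraphParam (q : ℝ × ℝ) : EuclideanSpace ℝ (Fin 4) :=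
  (WithLp.equiv 2 (Fin 4 → ℝ)).symm ![q.1, q.2, exp q.1 * cos q.2, -(exp q.1 * sin q.2)]

def rotProj (θ : ℝ) (p : EuclideanSpace ℝ (Fin 4)) : ℝ × ℝ :=
  (cos θ * p 2 - sin θ * p 3, sin θ * p 2 + cos θ * p 3)

theorem expGraphParam_mem_expGraph (q : ℝ × ℝ) : expGraphParam q ∈ expGraph := ⟨q.1, q.2, rfl⟩

theorem continuous_expGraphParam : Continuous expGraphParam :=
  (PiLp.continuous_toLp 2 _).comp <| by fun_prop

theorem expGraphParam_injective : Function.Injective expGraphParam := fun _ _ h =>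
  Prod.ext (congrArg (· 0) h) (congrArg (· 1) h)

theorem norm_expGraphParam_sq (q : ℝ × ℝ) :
    ‖expGraphParam q‖ ^ 2 = q.1 ^ 2 + q.2 ^ 2 + exp q.1 ^ 2 := by
  rw [EuclideanSpace.norm_sq_eq, Fin.sum_univ_four]
  simp only [expGraphParam, WithLp.equiv_symm_apply, Matrix.cons_val_zero, Matrix.cons_val_one,
    Matrix.cons_val, norm_eq_abs, sq_abs, norm_mul, abs_exp, mul_pow, norm_neg]
  linear_combination exp q.1 ^ 2 * sin_sq_add_cos_sq q.2

theorem lipschitzWith_rotProj (θ : ℝ) : LipschitzWith 1 (rotProj θ) := by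
  have h23 : (2 : Fin 4) ≠ 3 := by decide
  have := (lipschitzWith_one_mul_add_mul h23 (a := cos θ) (b := -sin θ)
    (by rw [neg_sq, cos_sq_add_sin_sq])).prodMk
      (lipschitzWith_one_mul_add_mul h23 (sin_sq_add_cos_sq θ))
  simp only [max_self, neg_mul, ← sub_eq_add_neg] at this
  exact this

theorem rotProj_expGraphParam (θ : ℝ) (q : ℝ × ℝ) :
    rotProj θ (expGraphParam q) = polarCoord.symm (exp q.1, θ - q.2) := by
  simp only [rotProj, expGraphParam, WithLp.equiv_symm_apply, Matrix.cons_val, mul_neg,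
    sub_neg_eq_add, polarCoord_symm_apply, cos_sub, sin_sub, Prod.mk.injEq]
  constructor <;> ring

theorem image_rotProj_image_expGraphParam (θ : ℝ) (s t : Set ℝ) :
    rotProj θ '' (expGraphParam '' (s ×ˢ t)) =
      polarCoord.symm '' ((exp '' s) ×ˢ ((θ - ·) '' t)) := by
  rw [image_image, ← prodMap_image_prod, image_image]
  simp only [rotProj_expGraphParam, Prod.map]

theorem le_hausdorffMeasure_image_expGraphParam {a b : ℝ} (hab : a ≤ b) (c : ℝ) {w : ℝ}
    (hw : w ≤ 2 * π) :
    ENNReal.ofReal ((exp b ^ 2 - exp a ^ 2) / 2) * ENNReal.ofReal w ≤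
      μH[2] (expGraphParam '' (Ioo a b ×ˢ Ioo c (c + w))) := by
  have hθ : (fun y => c + w / 2 - y) '' Ioo c (c + w) = Ioo (-(w / 2)) (w / 2) := by
    rw [image_const_sub_Ioo]; ring_nf
  calc _ = volume (polarCoord.symm '' (Ioo (exp a) (exp b) ×ˢ Ioo (-(w / 2)) (w / 2))) := by
        rw [volume_polarCoord_symm_image_Ioo_prod_Ioo (exp_pos a).le (exp_le_exp.2 hab)
          (by linarith) (by linarith), sub_neg_eq_add, add_halves]
    _ = μH[2] (rotProj (c + w / 2) '' (expGraphParam '' (Ioo a b ×ˢ Ioo c (c + w)))) := by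
        rw [hausdorffMeasure_prod_real, image_rotProj_image_expGraphParam, image_exp_Ioo, hθ]
    _ ≤ _ := by
        simpa using (lipschitzWith_rotProj _).hausdorffMeasure_image_le zero_le_two _

theorem measurableSet_image_expGraphParam {s : Set (ℝ × ℝ)} (hs : MeasurableSet s) :
    MeasurableSet (expGraphParam '' s) :=
  hs.image_of_continuousOn_injOn continuous_expGraphParam.continuousOn
    expGraphParam_injective.injOn

theorem natCast_mul_le_hausdorffMeasure_image_expGraphParam {a b : ℝ} (hab : a ≤ b) (c : ℝ)
    {w : ℝ} (hw : w ≤ 2 * π) (n : ℕ) :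
    n * (ENNReal.ofReal ((exp b ^ 2 - exp a ^ 2) / 2) * ENNReal.ofReal w) ≤
      μH[2] (expGraphParam '' (Icc a b ×ˢ Icc c (c + n * w))) := by
  set piece : ℕ → Set (ℝ × ℝ) := fun k => Ioo a b ×ˢ Ioo (c + k * w) (c + k * w + w)
  have hdisj : (Finset.range n : Set ℕ).PairwiseDisjoint (expGraphParam '' piece ·) := by
    intro j _ k _ hjk
    refine (disjoint_image_iff expGraphParam_injective).2 (disjoint_prod.2 (Or.inr ?_))
    refine Set.disjoint_left.2 fun y hj hk => hjk ?_
    have hw₀ : 0 < w := by linarith [hj.1, hj.2]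
    have hjk : (j : ℝ) < k + 1 := by nlinarith [hj.1, hk.2]
    have hkj : (k : ℝ) < j + 1 := by nlinarith [hk.1, hj.2]
    norm_cast at hjk hkj
    omega
  have hsub : ⋃ k ∈ Finset.range n, expGraphParam '' piece k ⊆
      expGraphParam '' (Icc a b ×ˢ Icc c (c + n * w)) := by
    refine iUnion₂_subset fun k hk => image_mono (prod_mono Ioo_subset_Icc_self fun y hy => ?_)
    have hw₀ : 0 < w := by linarith [hy.1, hy.2]
    have : (k : ℝ) + 1 ≤ n := by exact_mod_cast Finset.mem_range.1 hk
    constructor <;> nlinarith [hy.1, hy.2]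
  calc (n : ℝ≥0∞) * _ = ∑ k ∈ Finset.range n, _ := by
        rw [Finset.sum_const, Finset.card_range, nsmul_eq_mul]
    _ ≤ ∑ k ∈ Finset.range n, μH[2] (expGraphParam '' piece k) :=
        Finset.sum_le_sum fun k _ => le_hausdorffMeasure_image_expGraphParam hab _ hw
    _ = μH[2] (⋃ k ∈ Finset.range n, expGraphParam '' piece k) :=
        (measure_biUnion_finset hdisj fun k _ =>
          measurableSet_image_expGraphParam (measurableSet_Ioo.prod measurableSet_Ioo)).symm
    _ ≤ _ := measure_mono hsub

theorem norm_expGraphParam_le {r x y : ℝ} (hr : exp 1 ≤ r) (hx₀ : 0 ≤ x) (hx : x ≤ log r)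
    (hy : |y| ≤ r + 1 / 2) : ‖expGraphParam (x, y)‖ ≤ √3 * r := by
  have he : 2 < exp 1 := exp_one_gt_two
  have hr₀ : 0 < r := by linarith
  have hlog : log r ≤ r / exp 1 := by
    simpa [exp_sub, exp_log hr₀] using add_one_le_exp (log r - 1)
  have hx2 : 2 * x ≤ r := by
    rw [le_div_iff₀ (exp_pos 1)] at hlog
    nlinarith
  have hexp : exp x ≤ r := by simpa [exp_log hr₀] using exp_le_exp.2 hx
  have hy2 : y ^ 2 ≤ (r + 1 / 2) ^ 2 := sq_le_sq' (abs_le.1 hy).1 (abs_le.1 hy).2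
  rw [← sq_le_sq₀ (norm_nonneg _) (by positivity), norm_expGraphParam_sq, mul_pow,
    sq_sqrt zero_le_three]
  nlinarith [exp_pos x]

/-- **Remark 3.3**: the minimal surface `M = graph of D(eˣ cos y)` in `ℝ⁴` satisfies
`ℋ²(M ∩ 𝐁_{√3 r}) ≥ r(r² − 1)` for every `r ≥ e`; in particular it has volume growth
strictly faster than Euclidean (quadratic) growth. -/
theorem expGraph_volume_growth :
    ∀ r : ℝ, Real.exp 1 ≤ r →
      ENNReal.ofReal (r * (r ^ 2 - 1))
        ≤ μH[2] (expGraph ∩ closedBall (0 : EuclideanSpace ℝ (Fin 4)) (Real.sqrt 3 * r)) := by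
  intro r hr
  have hr₁ : 1 ≤ r := (one_le_exp zero_le_one).trans hr
  set n := ⌈2 * r⌉₊
  have hn : 2 * r ≤ n := Nat.le_ceil _
  have hn' : (n : ℝ) < 2 * r + 1 := Nat.ceil_lt_add_one (by positivity)
  have hpieces := natCast_mul_le_hausdorffMeasure_image_expGraphParam (log_nonneg hr₁)
    (-(n / 2)) (w := 1) (by linarith [pi_gt_three]) n
  rw [exp_log (by positivity), exp_zero, one_pow, ENNReal.ofReal_one, mul_one] at hpieces
  calc ENNReal.ofReal (r * (r ^ 2 - 1))
        = ENNReal.ofReal (2 * r) * ENNReal.ofReal ((r ^ 2 - 1) / 2) := by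
        rw [← ENNReal.ofReal_mul (by positivity)]; ring_nf
    _ ≤ n * ENNReal.ofReal ((r ^ 2 - 1) / 2) := by
        gcongr
        simpa using ENNReal.ofReal_le_ofReal hn
    _ ≤ _ := by
        refine hpieces.trans (measure_mono (image_subset_iff.2 fun q ⟨hx, hy⟩ => ?_))
        refine ⟨expGraphParam_mem_expGraph q, mem_closedBall_zero_iff.2 ?_⟩
        exact norm_expGraphParam_le hr hx.1 hx.2 (abs_le.2 ⟨by linarith [hy.1], by linarith [hy.2]⟩)
end
end
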